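/- arXiv:2601.17539 — 4 statements merged into one kernel-verified Lean document; each statement's English description precedes it below -/
import Mathlib

section
/- Let r ≥ 1 and N ≥ 2 be integers, let z = (z_1,…,z_r) ∈ ℂ^r with |z_i| ≤ 1 for all i, and let (s_1,…,s_r) ∈ ℂ^r with Re(s_j) > 1 for every 1 ≤ j ≤ r. Then Σ_{N>n_1>⋯>n_r>0} z_1^{n_1}⋯z_r^{n_r}/(n_1^{s_1}⋯n_r^{s_r}) = Σ_{i=0}^{r} (−1)^i · Li*_{(z_i,…,z_1)}(s_i,…,s_1)_{≥N} · Li_{(z_{i+1},…,z_r)}(s_{i+1},…,s_r), where all the infinite series appearing on the right-hand side converge absolutely, the i = 0 term is Li_z(s_1,…,s_r), and the i = r term is (−1)^r Li*_{(z_r,…,z_1)}(s_r,…,s_1)_{≥N}. -/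
open scoped Classical
open Filter Topology

/-- Partial sum `Li_{(w_1,…,w_m)}(s_1,…,s_m)_{<N}` (weights and exponents given by the first
`m` values of functions on `ℕ`). -/
noncomputable def liPartialN (m : ℕ) (w s : ℕ → ℂ) (N : ℕ) : ℂ :=
  ∑ n ∈ (Fintype.piFinset fun _ : Fin m => Finset.range N).filter
      (fun n => (∀ a b : Fin m, a < b → n b < n a) ∧ ∀ a, 0 < n a),
    ∏ t : Fin m, w (t : ℕ) ^ n t / (n t : ℂ) ^ s (t : ℕ)

/-- The multiple polylogarithm `Li_{(w_1,…,w_m)}(s_1,…,s_m)` as an unconditional sum. -/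
noncomputable def liSumN (m : ℕ) (w s : ℕ → ℂ) : ℂ :=
  ∑' n : Fin m → ℕ,
    if (∀ a b : Fin m, a < b → n b < n a) ∧ (∀ a, 0 < n a) then
      ∏ t : Fin m, w (t : ℕ) ^ n t / (n t : ℂ) ^ s (t : ℕ)
    else 0

/-- Tail of the multiple polylogarithm-star series `Li*_{(w_1,…,w_m)}(s_1,…,s_m)_{≥N}`. -/
noncomputable def liStarTailN (m : ℕ) (w s : ℕ → ℂ) (N : ℕ) : ℂ :=
  ∑' n : Fin m → ℕ,
    if (∀ a b : Fin m, a ≤ b → n b ≤ n a) ∧ (∀ a, N ≤ n a) then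
      ∏ t : Fin m, w (t : ℕ) ^ n t / (n t : ℂ) ^ s (t : ℕ)
    else 0

/-!
Frame a tuple `m = (m₀, …, m_{r-1})` as the sequence `N, m₀, …, m_{r-1}, 0`. After reversing the
`Li*` tuple and concatenating it with the `Li` tuple, the `i`-th product on the right becomes the
sum over the tuples whose framed sequence rises weakly up to position `i` and falls strictly from
position `i + 1` on. Splitting according to the step between positions `i` and `i + 1`, this is
`Aᵢ + Aᵢ₊₁`, where `Aₖ` sums over the tuples whose framed sequence is unimodal with peak at `k`.
Hence the alternating sum telescopes to `A₀ ± A_{r+1}`. Here `A₀` is the truncated sum over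
`N > m₀ > ⋯ > m_{r-1} > 0`, and `A_{r+1} = 0` because a sequence starting at `N ≥ 1` cannot rise
weakly to `0`. Absolute convergence justifies the Cauchy products and the splitting of the sums.
-/
open Set

lemma sum_range_neg_one_pow_mul_add {R : Type*} [Ring R] (a : ℕ → R) (n : ℕ) :
    ∑ i ∈ Finset.range n, (-1) ^ i * (a i + a (i + 1)) = a 0 - (-1) ^ n * a n := by
  have := Finset.sum_range_sub' (fun i => (-1 : R) ^ i * a i) n
  rw [pow_zero, one_mul] at this
  rw [← this]
  refine Finset.sum_congr rfl fun i _ => ?_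
  rw [pow_succ]
  noncomm_ring

lemma summable_fin_prod_of_nonneg {β : Type*} :
    ∀ {m : ℕ} (f : Fin m → β → ℝ), (∀ t b, 0 ≤ f t b) → (∀ t, Summable (f t)) →
      Summable fun n : Fin m → β => ∏ t, f t (n t)
  | 0, _, _, _ => Summable.of_finite
  | m + 1, f, hf0, hf => by
    refine (Equiv.summable_iff (Fin.consEquiv fun _ => β)).1 ?_
    have htail := summable_fin_prod_of_nonneg (fun t => f t.succ) (fun t => hf0 t.succ)
      (fun t => hf t.succ)
    simpa [Function.comp_def, Fin.consEquiv, Fin.prod_univ_succ] using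
      (hf 0).mul_of_nonneg htail (hf0 0) fun _ => Finset.prod_nonneg fun t _ => hf0 _ _

lemma norm_pow_div_natCast_cpow_le {w s : ℂ} (hw : ‖w‖ ≤ 1) (hs : s.re ≠ 0) (n : ℕ) :
    ‖w ^ n / (n : ℂ) ^ s‖ ≤ (n : ℝ) ^ (-s.re) := by
  rcases n.eq_zero_or_pos with rfl | hn
  -- both sides vanish: `(0 : ℂ) ^ s = 0`, `1 / 0 = 0` and `(0 : ℝ) ^ (-s.re) = 0`
  · have : s ≠ 0 := by rintro rfl; exact hs rfl
    simp [Complex.zero_cpow this, Real.zero_rpow (neg_ne_zero.2 hs)]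
  · rw [norm_div, norm_pow, Complex.norm_natCast_cpow_of_pos hn,
      Real.rpow_neg (Nat.cast_nonneg n), div_eq_mul_inv]
    exact mul_le_of_le_one_left (by positivity) (pow_le_one₀ (norm_nonneg w) hw)

def framed {r : ℕ} (N : ℕ) (m : Fin r → ℕ) : ℕ → ℕ
  | 0 => N
  | k + 1 => if h : k < r then m ⟨k, h⟩ else 0

def riseFallSet (r N i j : ℕ) : Set (Fin r → ℕ) :=
  {m | MonotoneOn (framed N m) (Iic i) ∧ StrictAntiOn (framed N m) (Icc j (r + 1))}

section Framed

variable {r N : ℕ} {m : Fin r → ℕ}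

@[simp] lemma framed_zero : framed N m 0 = N := rfl

lemma framed_succ {k : ℕ} (hk : k < r) : framed N m (k + 1) = m ⟨k, hk⟩ := dif_pos hk

@[simp] lemma framed_last : framed N m (r + 1) = 0 := dif_neg (lt_irrefl r)

lemma framed_append_left {i j k : ℕ} (u : Fin i → ℕ) (v : Fin j → ℕ) (hk : k < i) :
    framed N (Fin.append u v) (k + 1) = u ⟨k, hk⟩ :=
  (framed_succ (by omega)).trans (Fin.append_left u v ⟨k, hk⟩)

lemma framed_append_right {i j k : ℕ} (u : Fin i → ℕ) (v : Fin j → ℕ) (hk : k < j) :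
    framed N (Fin.append u v) (i + 1 + k) = v ⟨k, hk⟩ := by
  rw [add_right_comm]
  exact (framed_succ (by omega)).trans (Fin.append_right u v ⟨k, hk⟩)

lemma monotoneOn_framed_append_iff {i j : ℕ} (u : Fin i → ℕ) (v : Fin j → ℕ) :
    MonotoneOn (framed N (Fin.append u v)) (Iic i) ↔ Monotone u ∧ ∀ a, N ≤ u a := by
  constructor
  · intro h
    refine ⟨fun a b hab => ?_, fun a => ?_⟩
    · simpa only [framed_append_left u v a.isLt, framed_append_left u v b.isLt] using
        h (show (a : ℕ) + 1 ≤ i from a.isLt) (show (b : ℕ) + 1 ≤ i from b.isLt)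
          (Nat.succ_le_succ hab)
    · simpa only [framed_zero, framed_append_left u v a.isLt] using
        h (Nat.zero_le i) (show (a : ℕ) + 1 ≤ i from a.isLt) (Nat.zero_le _)
  · rintro ⟨hmono, hge⟩ (_ | x) hx (_ | y) hy hxy
    · exact le_rfl
    · rw [framed_append_left u v hy]
      exact hge _
    · omega
    · rw [framed_append_left u v hx, framed_append_left u v hy]
      exact hmono (Fin.mk_le_mk.2 (by omega))

lemma strictAntiOn_framed_append_iff {i j : ℕ} (u : Fin i → ℕ) (v : Fin j → ℕ) :
    StrictAntiOn (framed N (Fin.append u v)) (Icc (i + 1) (i + j + 1)) ↔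
      StrictAnti v ∧ ∀ b, 0 < v b := by
  have hlast : framed N (Fin.append u v) (i + 1 + j) = 0 := by
    rw [add_right_comm]; exact framed_last
  constructor
  · intro h
    refine ⟨fun a b hab => ?_, fun b => ?_⟩
    · simpa only [framed_append_right u v a.isLt, framed_append_right u v b.isLt] using
        h (a := i + 1 + a) (b := i + 1 + b) ⟨by omega, by omega⟩ ⟨by omega, by omega⟩
          (by simpa using hab)
    · simpa only [framed_append_right u v b.isLt, hlast] using
        h (a := i + 1 + b) (b := i + 1 + j) ⟨by omega, by omega⟩ ⟨by omega, by omega⟩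
          (by omega)
  · rintro ⟨hanti, hpos⟩ x ⟨hx, hx'⟩ y ⟨hy, hy'⟩ hxy
    obtain ⟨a, rfl⟩ := Nat.exists_eq_add_of_le hx
    obtain ⟨b, rfl⟩ := Nat.exists_eq_add_of_le hy
    rw [framed_append_right u v (by omega : a < j)]
    rcases (by omega : b < j ∨ b = j) with hb | rfl
    · rw [framed_append_right u v hb]
      exact hanti (Fin.mk_lt_mk.2 (by omega))
    · rw [hlast]
      exact hpos _

lemma strictAntiOn_framed_iff (hN : 0 < N) :
    StrictAntiOn (framed N m) (Icc 0 (r + 1)) ↔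
      (∀ a, m a < N) ∧ StrictAnti m ∧ ∀ a, 0 < m a := by
  constructor
  · intro h
    refine ⟨fun a => ?_, fun a b hab => ?_, fun a => ?_⟩
    · simpa only [framed_zero, framed_succ a.isLt] using
        h (a := 0) (b := a + 1) ⟨le_rfl, by omega⟩ ⟨by omega, by omega⟩ (by omega)
    · simpa only [framed_succ a.isLt, framed_succ b.isLt] using
        h (a := a + 1) (b := b + 1) ⟨by omega, by omega⟩ ⟨by omega, by omega⟩
          (by simpa using hab)
    · simpa only [framed_succ a.isLt, framed_last] using
        h (a := a + 1) (b := r + 1) ⟨by omega, by omega⟩ ⟨by omega, le_rfl⟩ (by omega)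
  · rintro ⟨hlt, hanti, hpos⟩ (_ | x) ⟨-, hx⟩ (_ | y) ⟨-, hy⟩ hxy
    · omega
    · rcases (by omega : y < r ∨ y = r) with hy | rfl
      · rw [framed_succ hy]; exact hlt _
      · rwa [framed_last]
    · omega
    · rw [framed_succ (by omega : x < r)]
      rcases (by omega : y < r ∨ y = r) with hy | rfl
      · rw [framed_succ hy]; exact hanti (Fin.mk_lt_mk.2 (by omega))
      · rw [framed_last]; exact hpos _

end Framed

section RiseFall

variable {r N i : ℕ}

lemma riseFallSet_eq_union (hi : i ≤ r) :
    riseFallSet r N i (i + 1) = riseFallSet r N i i ∪ riseFallSet r N (i + 1) (i + 1) := by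
  ext m
  constructor
  · rintro ⟨hmono, hanti⟩
    by_cases hstep : framed N m (i + 1) < framed N m i
    · refine Or.inl ⟨hmono, ?_⟩
      rw [← Icc_union_Icc_eq_Icc (Nat.le_succ i) (by omega : i + 1 ≤ r + 1)]
      refine StrictAntiOn.union (fun a ha b hb hab => ?_) hanti (isGreatest_Icc (Nat.le_succ i))
        (isLeast_Icc (by omega))
      obtain ⟨rfl, rfl⟩ : a = i ∧ b = i + 1 := by simp only [mem_Icc] at ha hb; omega
      exact hstep
    · refine Or.inr ⟨?_, hanti⟩
      rw [← Iic_union_Icc_eq_Iic (Nat.le_succ i)]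
      refine hmono.union_right (fun a ha b hb hab => ?_) isGreatest_Iic
        (isLeast_Icc (Nat.le_succ i))
      simp only [mem_Icc] at ha hb
      rcases (by omega : a = b ∨ a = i ∧ b = i + 1) with rfl | ⟨rfl, rfl⟩
      · exact le_rfl
      · exact not_lt.1 hstep
  · rintro (⟨hmono, hanti⟩ | ⟨hmono, hanti⟩)
    · exact ⟨hmono, hanti.mono (Icc_subset_Icc_left (Nat.le_succ i))⟩
    · exact ⟨hmono.mono (Iic_subset_Iic.2 (Nat.le_succ i)), hanti⟩

lemma disjoint_riseFallSet (hi : i ≤ r) :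
    Disjoint (riseFallSet r N i i) (riseFallSet r N (i + 1) (i + 1)) :=
  Set.disjoint_left.2 fun _ ⟨_, hanti⟩ ⟨hmono, _⟩ =>
    (hanti ⟨le_rfl, by omega⟩ ⟨by omega, by omega⟩ (Nat.lt_succ_self i)).not_ge
      (hmono (Nat.le_succ i) (mem_Iic.2 le_rfl) (Nat.le_succ i))

lemma riseFallSet_succ_eq_empty (hN : 0 < N) : riseFallSet r N (r + 1) (r + 1) = ∅ :=
  eq_empty_iff_forall_notMem.2 fun m ⟨hmono, _⟩ => by
    have := hmono (Nat.zero_le _) (mem_Iic.2 le_rfl) (Nat.zero_le _)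
    simp only [framed_zero, framed_last] at this
    omega

lemma mem_riseFallSet_zero_iff (hN : 0 < N) {m : Fin r → ℕ} :
    m ∈ riseFallSet r N 0 0 ↔ (∀ a, m a < N) ∧ StrictAnti m ∧ ∀ a, 0 < m a := by
  have hmono : MonotoneOn (framed N m) (Iic 0) := fun a ha b hb _ => by
    rw [Nat.le_zero.1 ha, Nat.le_zero.1 hb]
  exact (and_iff_right hmono).trans (strictAntiOn_framed_iff hN)

end RiseFall

noncomputable def mplTerm {r : ℕ} (w s : ℕ → ℂ) (n : Fin r → ℕ) : ℂ :=
  ∏ t : Fin r, w t ^ n t / (n t : ℂ) ^ s t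

section MplTerm

variable {r : ℕ} {w s : ℕ → ℂ}

lemma summable_norm_mplTerm (hw : ∀ t < r, ‖w t‖ ≤ 1) (hs : ∀ t < r, 1 < (s t).re) :
    Summable fun n : Fin r → ℕ => ‖mplTerm w s n‖ := by
  have hs' (t : Fin r) : 1 < (s t).re := hs t t.isLt
  have hprod := summable_fin_prod_of_nonneg (fun t (k : ℕ) => (k : ℝ) ^ (-(s t).re))
    (fun _ _ => by positivity) fun t => Real.summable_nat_rpow.2 (by linarith [hs' t])
  refine hprod.of_nonneg_of_le (fun _ => norm_nonneg _) fun n => ?_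
  rw [mplTerm, norm_prod]
  exact Finset.prod_le_prod (fun _ _ => norm_nonneg _) fun t _ =>
    norm_pow_div_natCast_cpow_le (hw t t.isLt) (by linarith [hs' t]) _

lemma summable_norm_ite_mplTerm (hw : ∀ t < r, ‖w t‖ ≤ 1) (hs : ∀ t < r, 1 < (s t).re)
    (p : (Fin r → ℕ) → Prop) [DecidablePred p] :
    Summable fun n : Fin r → ℕ => ‖if p n then mplTerm w s n else 0‖ :=
  (summable_norm_mplTerm hw hs).of_nonneg_of_le (fun _ => norm_nonneg _) fun n => by
    split_ifs <;> simp

lemma mplTerm_append {i j : ℕ} (u : Fin i → ℕ) (v : Fin j → ℕ) :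
    mplTerm w s (Fin.append u v) =
      mplTerm w s u * mplTerm (fun t => w (i + t)) (fun t => s (i + t)) v := by
  simp only [mplTerm, Fin.prod_univ_add, Fin.append_left, Fin.append_right, Fin.val_castAdd,
    Fin.val_natAdd]

lemma liSumN_eq_tsum_mplTerm (m : ℕ) :
    liSumN m w s =
      ∑' n : Fin m → ℕ, if StrictAnti n ∧ ∀ a, 0 < n a then mplTerm w s n else 0 :=
  rfl

lemma liStarTailN_rev (i N : ℕ) :
    liStarTailN i (fun j => w (i - 1 - j)) (fun j => s (i - 1 - j)) N =
      ∑' u : Fin i → ℕ, if Monotone u ∧ ∀ a, N ≤ u a then mplTerm w s u else 0 := by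
  rw [liStarTailN, ← (Equiv.arrowCongr Fin.revPerm (Equiv.refl ℕ)).tsum_eq]
  refine tsum_congr fun u => ?_
  simp only [Equiv.arrowCongr_apply, Fin.revPerm_symm, Equiv.coe_refl, Function.comp_apply, id,
    Fin.revPerm_apply]
  have hval (t : Fin i) : i - 1 - (t : ℕ) = t.rev := by rw [Fin.val_rev]; omega
  refine if_congr ⟨fun ⟨hanti, hge⟩ => ⟨fun a b hab => ?_, fun a => ?_⟩,
      fun ⟨hmono, hge⟩ => ⟨fun a b hab => hmono (Fin.rev_le_rev.2 hab), fun a => hge _⟩⟩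
    ?_ rfl
  · simpa using hanti b.rev a.rev (Fin.rev_le_rev.2 hab)
  · simpa using hge a.rev
  · simp only [hval]
    exact Equiv.prod_comp Fin.revPerm fun t => w t ^ u t / (u t : ℂ) ^ s t

end MplTerm

section Decomposition

variable {r N : ℕ} {z s : ℕ → ℂ}

lemma tsum_riseFallSet_eq_mul {i : ℕ} (hi : i ≤ r) (hz : ∀ t < r, ‖z t‖ ≤ 1)
    (hs : ∀ t < r, 1 < (s t).re) :
    ∑' m : riseFallSet r N i (i + 1), mplTerm z s (m : Fin r → ℕ) =
      liStarTailN i (fun j => z (i - 1 - j)) (fun j => s (i - 1 - j)) N *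
        liSumN (r - i) (fun j => z (i + j)) (fun j => s (i + j)) := by
  obtain ⟨j, rfl⟩ := Nat.exists_eq_add_of_le hi
  rw [Nat.add_sub_cancel_left, liStarTailN_rev, liSumN_eq_tsum_mplTerm,
    tsum_mul_tsum_of_summable_norm
      (summable_norm_ite_mplTerm (fun t ht => hz t (by omega)) (fun t ht => hs t (by omega)) _)
      (summable_norm_ite_mplTerm (w := fun t => z (i + t)) (s := fun t => s (i + t))
        (fun t ht => hz _ (by omega)) (fun t ht => hs _ (by omega)) _),
    tsum_subtype, ← (Fin.appendEquiv i j).tsum_eq]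
  refine tsum_congr fun ⟨u, v⟩ => ?_
  rw [ite_zero_mul_ite_zero, ← mplTerm_append, indicator_apply]
  refine if_congr ?_ rfl rfl
  exact (monotoneOn_framed_append_iff u v).and (strictAntiOn_framed_append_iff u v)

lemma tsum_riseFallSet_split {E : Type*} [NormedAddCommGroup E] [CompleteSpace E] {i : ℕ}
    (hi : i ≤ r) {f : (Fin r → ℕ) → E} (hf : Summable f) :
    ∑' m : riseFallSet r N i (i + 1), f m =
      ∑' m : riseFallSet r N i i, f m + ∑' m : riseFallSet r N (i + 1) (i + 1), f m := by
  rw [riseFallSet_eq_union hi]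
  exact Summable.tsum_union_disjoint (disjoint_riseFallSet hi) (hf.subtype _) (hf.subtype _)

lemma liPartialN_eq_tsum_riseFallSet (hN : 0 < N) (w s : ℕ → ℂ) :
    liPartialN r w s N = ∑' m : riseFallSet r N 0 0, mplTerm w s (m : Fin r → ℕ) := by
  have hset : riseFallSet r N 0 0 = ↑((Fintype.piFinset fun _ => Finset.range N).filter
      fun n : Fin r → ℕ => (∀ a b : Fin r, a < b → n b < n a) ∧ ∀ a, 0 < n a) := by
    ext m
    simp only [Finset.coe_filter, Fintype.mem_piFinset, Finset.mem_range, mem_ofPred_eq,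
      mem_riseFallSet_zero_iff hN]
    rfl
  rw [hset, Finset.tsum_subtype']
  rfl

end Decomposition

theorem combinatorial_identity_partial_sum_general
    (r : ℕ) (N : ℕ) (hN : 2 ≤ N) (z s : ℕ → ℂ)
    (hz : ∀ i < r, ‖z i‖ ≤ 1) (hs : ∀ j < r, 1 < (s j).re) :
    (∀ i : ℕ, i ≤ r →
      (Summable (fun n : Fin i → ℕ =>
        if (∀ a b : Fin i, a ≤ b → n b ≤ n a) ∧ (∀ a, N ≤ n a) then
          ∏ t : Fin i, z (i - 1 - (t : ℕ)) ^ n t / (n t : ℂ) ^ s (i - 1 - (t : ℕ))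
        else 0) ∧
      Summable (fun n : Fin (r - i) → ℕ =>
        if (∀ a b : Fin (r - i), a < b → n b < n a) ∧ (∀ a, 0 < n a) then
          ∏ t : Fin (r - i), z (i + (t : ℕ)) ^ n t / (n t : ℂ) ^ s (i + (t : ℕ))
        else 0))) ∧
    liPartialN r z s N =
      ∑ i ∈ Finset.range (r + 1),
        (-1 : ℂ) ^ i *
          liStarTailN i (fun j => z (i - 1 - j)) (fun j => s (i - 1 - j)) N *
          liSumN (r - i) (fun j => z (i + j)) (fun j => s (i + j)) := by
  refine ⟨fun i hi => ⟨?_, ?_⟩, ?_⟩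
  · exact (summable_norm_ite_mplTerm (w := fun t => z (i - 1 - t)) (s := fun t => s (i - 1 - t))
      (fun t _ => hz _ (by omega)) (fun t _ => hs _ (by omega)) _).of_norm
  · exact (summable_norm_ite_mplTerm (w := fun t => z (i + t)) (s := fun t => s (i + t))
      (fun t _ => hz _ (by omega)) (fun t _ => hs _ (by omega)) _).of_norm
  have hN₀ : 0 < N := by omega
  set a : ℕ → ℂ := fun k => ∑' m : riseFallSet r N k k, mplTerm z s (m : Fin r → ℕ)
  have hsum := (summable_norm_mplTerm hz hs).of_norm
  calc liPartialN r z s N = a 0 - (-1) ^ (r + 1) * a (r + 1) := by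
        simp [a, liPartialN_eq_tsum_riseFallSet hN₀, riseFallSet_succ_eq_empty hN₀]
    _ = ∑ i ∈ Finset.range (r + 1), (-1) ^ i * (a i + a (i + 1)) :=
        (sum_range_neg_one_pow_mul_add a (r + 1)).symm
    _ = _ := Finset.sum_congr rfl fun i hi => by
        have hi : i ≤ r := Nat.lt_succ_iff.1 (Finset.mem_range.1 hi)
        rw [← tsum_riseFallSet_split hi hsum, tsum_riseFallSet_eq_mul hi hz hs, mul_assoc]

/-- the combinatorial identity
`Li_z(s)_{<N} = Σ_{i=0}^r (−1)^i Li*_{(z_i,…,z_1)}(s_i,…,s_1)_{≥N} · Li_{(z_{i+1},…,z_r)}(s_{i+1},…,s_r)`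
for `Re(s_j) > 1` (so that all infinite series on the right converge absolutely). -/
theorem combinatorial_identity_partial_sum
    (r : ℕ) (hr : 1 ≤ r) (N : ℕ) (hN : 2 ≤ N) (z s : ℕ → ℂ)
    (hz : ∀ i < r, ‖z i‖ ≤ 1) (hs : ∀ j < r, 1 < (s j).re) :
    (∀ i : ℕ, i ≤ r →
      (Summable (fun n : Fin i → ℕ =>
        if (∀ a b : Fin i, a ≤ b → n b ≤ n a) ∧ (∀ a, N ≤ n a) then
          ∏ t : Fin i, z (i - 1 - (t : ℕ)) ^ n t / (n t : ℂ) ^ s (i - 1 - (t : ℕ))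
        else 0) ∧
      Summable (fun n : Fin (r - i) → ℕ =>
        if (∀ a b : Fin (r - i), a < b → n b < n a) ∧ (∀ a, 0 < n a) then
          ∏ t : Fin (r - i), z (i + (t : ℕ)) ^ n t / (n t : ℂ) ^ s (i + (t : ℕ))
        else 0))) ∧
    liPartialN r z s N =
      ∑ i ∈ Finset.range (r + 1),
        (-1 : ℂ) ^ i *
          liStarTailN i (fun j => z (i - 1 - j)) (fun j => s (i - 1 - j)) N *
          liSumN (r - i) (fun j => z (i + j)) (fun j => s (i + j)) :=
  combinatorial_identity_partial_sum_general r N hN z s hz hs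
end

section
/- Let N ≥ 2 and r ≥ 1 be integers, let (z_1,…,z_r) ∈ ℂ^r with |z_i| ≤ 1 for all i, let K be a compact subset of ℂ^r, and let k_0 be the smallest non-negative integer such that (s_1+k_0, s_2,…,s_r) ∈ U_r for all (s_1,…,s_r) ∈ K. Then the family of functions ((s_1,…,s_r) ↦ (s_1−1)_{k+1}/(k+1)! · z_1^{n_1}z_2^{n_2}⋯z_r^{n_r}/(n_1^{s_1+k} n_2^{s_2}⋯n_r^{s_r})), indexed by integers n_1 ≥ n_2 ≥ ⋯ ≥ n_r ≥ N and k ≥ k_0, converges normally on K, i.e. the sum over all indices of the suprema over K of the absolute values is finite; moreover there exists ε > 0 such that this sum of suprema is O(N^{−ε}) as N → ∞. -/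
open scoped Classical
open Filter Topology Asymptotics

/-- Pochhammer symbol `(s)_k = s(s+1)⋯(s+k-1)`. -/
noncomputable def poch (s : ℂ) (k : ℕ) : ℂ := ∏ j ∈ Finset.range k, (s + j)

/-- The supremum over `K` of the absolute value of the term indexed by `p = (n, k)`:
`(s_1−1)_{k+1}/(k+1)! · z_1^{n_1}⋯z_r^{n_r}/(n_1^{s_1+k} n_2^{s_2}⋯n_r^{s_r})`
if `n_1 ≥ ⋯ ≥ n_r ≥ N` and `k ≥ k₀`, and `0` otherwise. -/
noncomputable def supTerm (r : ℕ) (hr : 0 < r) (z : Fin r → ℂ) (K : Set (Fin r → ℂ))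
    (k₀ N : ℕ) (p : (Fin r → ℕ) × ℕ) : ℝ :=
  if (∀ i j : Fin r, i ≤ j → p.1 j ≤ p.1 i) ∧ (∀ i, N ≤ p.1 i) ∧ k₀ ≤ p.2 then
    ⨆ s ∈ K,
      ‖poch (s ⟨0, hr⟩ - 1) (p.2 + 1) / (Nat.factorial (p.2 + 1) : ℂ) *
        ∏ i, z i ^ p.1 i /
          (p.1 i : ℂ) ^ (s i + if i = (⟨0, hr⟩ : Fin r) then (p.2 : ℂ) else 0)‖
  else 0

/-!
Put `A ≥ |s₁ - 1|` on `K`. Since `|z_i| ≤ 1`, the `(n, k)` term is at most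
`(A)_{k+1}/(k+1)! · ∏ n_i^{-e_i}` with `e = Re s + k·δ₁`. By compactness the inequalities
defining `k₀` hold with a uniform margin: `i·c ≤ Re(s₁ + ⋯ + s_i) + k₀` on `K` for some
`c > 1`. As `n` is non-increasing, Abel summation shows that `∏ n_i^{-e_i}` can only grow when
`e` is replaced by exponents with smaller partial sums; with `ε = (c-1)/2` the exponents
`1 + ε` everywhere, plus `k - k₀ + ε` at `n₁`, give the bound
`N^{-ε} · 2^{-(k-k₀)} (A)_{k+1}/(k+1)! · ∏ n_i^{-(1+ε)}`. Summed over `(n, k)` this is a product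
of `r` convergent series `∑ m^{-(1+ε)}` and a binomial series at `1/2`.
-/

open Finset

section Abel

variable {ι : Type*} [LinearOrder ι] {a d : ι → ℝ}

theorem sum_mul_le_sum_mul_of_antitone (ha : Antitone a) (s : Finset ι)
    (hd : ∀ i ∈ s, 0 ≤ ∑ j ∈ s with j ≤ i, d j) {t : ι} (ht : ∀ i ∈ s, i ≤ t) :
    (∑ i ∈ s, d i) * a t ≤ ∑ i ∈ s, d i * a i := by
  induction s using Finset.induction_on_max generalizing t with
  | empty => simp
  | insert m s hm ih =>
    have hms : m ∉ s := fun h => lt_irrefl m (hm m h)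
    have hds : ∀ i ∈ s, 0 ≤ ∑ j ∈ s with j ≤ i, d j := fun i hi => by
      simpa [filter_insert, not_le.2 (hm i hi)] using hd i (mem_insert_of_mem hi)
    have htotal : 0 ≤ d m + ∑ i ∈ s, d i := by
      simpa [filter_insert, filter_true_of_mem fun i hi => (hm i hi).le, sum_insert hms]
        using hd m (mem_insert_self m s)
    rw [sum_insert hms, sum_insert hms]
    calc (d m + ∑ i ∈ s, d i) * a t ≤ (d m + ∑ i ∈ s, d i) * a m :=
          mul_le_mul_of_nonneg_left (ha (ht m (mem_insert_self m s))) htotal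
      _ ≤ d m * a m + ∑ i ∈ s, d i * a i := by
          rw [add_mul]
          exact add_le_add_right (ih hds fun i hi => (hm i hi).le) _

theorem sum_mul_nonneg_of_antitone [Fintype ι] [LocallyFiniteOrderBot ι] (ha : Antitone a)
    (ha0 : ∀ i, 0 ≤ a i) (hd : ∀ i, 0 ≤ ∑ j ∈ Iic i, d j) : 0 ≤ ∑ i, d i * a i := by
  rcases isEmpty_or_nonempty ι with hι | hι
  · simp
  set t := (univ : Finset ι).max' univ_nonempty
  have ht : ∀ i ∈ (univ : Finset ι), i ≤ t := fun i hi => le_max' _ i hi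
  have hsum : ∑ i, d i = ∑ j ∈ Iic t, d j := by
    rw [← filter_ge_eq_Iic, filter_true_of_mem ht]
  refine (mul_nonneg (hsum ▸ hd t) (ha0 t)).trans
    (sum_mul_le_sum_mul_of_antitone ha univ (fun i _ => ?_) ht)
  rw [filter_ge_eq_Iic]
  exact hd i

end Abel

theorem prod_rpow_neg_le_of_sum_Iic_le {ι : Type*} [Fintype ι] [LinearOrder ι]
    [LocallyFiniteOrderBot ι] {x : ι → ℝ} (hx : Antitone x) (hx1 : ∀ i, 1 ≤ x i)
    {e f : ι → ℝ} (hef : ∀ i, ∑ j ∈ Iic i, e j ≤ ∑ j ∈ Iic i, f j) :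
    ∏ i, x i ^ (-f i) ≤ ∏ i, x i ^ (-e i) := by
  have hx0 i : 0 < x i := zero_lt_one.trans_le (hx1 i)
  simp only [Real.rpow_def_of_pos (hx0 _), ← Real.exp_sum, Real.exp_le_exp, mul_neg,
    sum_neg_distrib, neg_le_neg_iff]
  rw [← sub_nonneg, ← sum_sub_distrib]
  simp only [mul_comm (Real.log _), ← sub_mul]
  refine sum_mul_nonneg_of_antitone (fun i j hij => Real.log_le_log (hx0 j) (hx hij))
    (fun i => Real.log_nonneg (hx1 i)) fun i => ?_
  rw [sum_sub_distrib, sub_nonneg]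
  exact hef i

theorem summable_prod_apply {ι β : Type*} [Fintype ι] {u : β → ℝ} (hu0 : 0 ≤ u)
    (hu : Summable u) : Summable fun n : ι → β => ∏ i, u (n i) := by
  refine summable_of_sum_le (c := (∑' b, u b) ^ Fintype.card ι)
    (fun n => prod_nonneg fun i _ => hu0 _) fun S => ?_
  calc ∑ n ∈ S, ∏ i, u (n i)
      ≤ ∑ n ∈ Fintype.piFinset fun i => S.image (· i), ∏ i, u (n i) :=
        sum_le_sum_of_subset_of_nonneg (fun n hn => Fintype.mem_piFinset.2
          fun i => mem_image_of_mem _ hn) fun n _ _ => prod_nonneg fun i _ => hu0 _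
    _ = ∏ i, ∑ b ∈ S.image (· i), u b := (prod_univ_sum _ _).symm
    _ ≤ ∏ _i : ι, ∑' b, u b :=
        prod_le_prod (fun i _ => sum_nonneg fun b _ => hu0 b)
          fun i _ => hu.sum_le_tsum _ fun b _ => hu0 b
    _ = (∑' b, u b) ^ Fintype.card ι := by rw [prod_const, card_univ]

theorem IsCompact.exists_one_lt_forall_mul_le {X ι : Type*} [TopologicalSpace X] [Finite ι]
    {K : Set X} (hK : IsCompact K) {g : ι → X → ℝ} (hg : ∀ i, Continuous (g i)) {w : ι → ℝ}
    (hw : ∀ i, 0 < w i) (h : ∀ x ∈ K, ∀ i, w i < g i x) :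
    ∃ c, 1 < c ∧ ∀ x ∈ K, ∀ i, c * w i ≤ g i x := by
  let _ : TopologicalSpace ι := ⊥
  have : DiscreteTopology ι := ⟨rfl⟩
  have hcont : Continuous fun p : X × ι => g p.2 p.1 / w p.2 :=
    continuous_prod_of_discrete_right.2 fun i => (hg i).div_const (w i)
  obtain ⟨c, hc, hcK⟩ := (hK.prod isCompact_univ).exists_forall_le' hcont.continuousOn
    (a := 1) fun p hp => (one_lt_div (hw p.2)).2 (h p.1 hp.1 p.2)
  exact ⟨c, hc, fun x hx i => (le_div_iff₀ (hw i)).1 (hcK (x, i) ⟨hx, trivial⟩)⟩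

/-- The binomial series of `(1 - x)^{-A}`. -/
theorem summable_prod_add_div_mul_pow {A x : ℝ} (hA : 0 ≤ A) (hx0 : 0 ≤ x) (hx : x < 1) :
    Summable fun k : ℕ => (∏ j ∈ range k, (A + j) / (j + 1)) * x ^ k := by
  have hratio : Tendsto (fun k : ℕ => (A + k) / (k + 1) * x) atTop (𝓝 x) := by
    have h : Tendsto (fun k : ℕ => 1 + (A - 1) * (1 / ((k : ℝ) + 1))) atTop (𝓝 1) := by
      simpa using tendsto_const_nhds.add
        (tendsto_one_div_add_atTop_nhds_zero_nat.const_mul (A - 1))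
    refine (h.mul_const x).congr' (Eventually.of_forall fun k => ?_) |>.trans ?_
    · have : (k : ℝ) + 1 ≠ 0 := by positivity
      field_simp
      ring
    · simp
  refine summable_of_ratio_norm_eventually_le (r := (1 + x) / 2) (by linarith) ?_
  filter_upwards [hratio.eventually_le_const (by linarith : x < (1 + x) / 2)] with k hk
  rw [prod_range_succ, pow_succ, Real.norm_eq_abs, Real.norm_eq_abs,
    show ∀ a b c d : ℝ, a * b * (c * d) = a * c * (b * d) from fun _ _ _ _ => by ring,
    abs_mul, mul_comm]
  gcongr
  rw [abs_of_nonneg (by positivity)]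
  simpa [div_mul_eq_mul_div] using hk

theorem norm_poch_div_factorial_le {w : ℂ} {A : ℝ} (hw : ‖w‖ ≤ A) (k : ℕ) :
    ‖poch w k / k.factorial‖ ≤ ∏ j ∈ range k, (A + j) / (j + 1) := by
  rw [poch, ← prod_range_add_one_eq_factorial, Nat.cast_prod, ← prod_div_distrib, norm_prod]
  refine prod_le_prod (fun j _ => norm_nonneg _) fun j _ => ?_
  rw [norm_div]
  push_cast
  rw [show ((j : ℂ) + 1) = ((j + 1 : ℕ) : ℂ) by push_cast; ring, Complex.norm_natCast]
  push_cast
  gcongr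
  exact (norm_add_le _ _).trans (by simpa using hw)

theorem norm_pow_div_natCast_cpow_le_s10 {z : ℂ} (hz : ‖z‖ ≤ 1) {m : ℕ} (hm : 0 < m) (w : ℂ) :
    ‖z ^ m / (m : ℂ) ^ w‖ ≤ (m : ℝ) ^ (-w.re) := by
  rw [norm_div, norm_pow, Complex.norm_natCast_cpow_of_pos hm,
    Real.rpow_neg (Nat.cast_nonneg m), ← one_div]
  gcongr
  exact pow_le_one₀ (norm_nonneg z) hz

/-- The factor `2^{k₀+1} (1/2)^{k+1} = 2^{-(k-k₀)}` comes from `n₁ ≥ 2`. -/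
noncomputable def majorant {ι : Type*} [Fintype ι] (A ε : ℝ) (k₀ : ℕ) (p : (ι → ℕ) × ℕ) : ℝ :=
  (∏ i, (p.1 i : ℝ) ^ (-(1 + ε))) *
    (2 ^ (k₀ + 1) * ((∏ j ∈ range (p.2 + 1), (A + j) / (j + 1)) * (1 / 2) ^ (p.2 + 1)))

theorem majorant_nonneg {ι : Type*} [Fintype ι] {A : ℝ} (hA : 0 ≤ A) (ε : ℝ) (k₀ : ℕ)
    (p : (ι → ℕ) × ℕ) : 0 ≤ majorant A ε k₀ p :=
  mul_nonneg (prod_nonneg fun _ _ => by positivity) <| mul_nonneg (by positivity) <|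
    mul_nonneg (prod_nonneg fun _ _ => by positivity) (by positivity)

theorem summable_majorant {ι : Type*} [Fintype ι] {A ε : ℝ} (hA : 0 ≤ A) (hε : 0 < ε)
    (k₀ : ℕ) :
    Summable (majorant (ι := ι) A ε k₀) := by
  have hn : Summable fun n : ι → ℕ => ∏ i, (n i : ℝ) ^ (-(1 + ε)) :=
    summable_prod_apply (u := fun m : ℕ => (m : ℝ) ^ (-(1 + ε))) (fun _ => by positivity)
      (Real.summable_nat_rpow.2 (by linarith))
  have hk : Summable fun k : ℕ =>
      2 ^ (k₀ + 1) * ((∏ j ∈ range (k + 1), (A + j) / (j + 1)) * (1 / 2 : ℝ) ^ (k + 1)) :=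
    ((summable_nat_add_iff 1).2
      (summable_prod_add_div_mul_pow hA (by norm_num) (by norm_num))).mul_left _
  exact hn.mul_of_nonneg hk (fun _ => prod_nonneg fun _ _ => by positivity) fun _ =>
    mul_nonneg (by positivity) (mul_nonneg (prod_nonneg fun _ _ => by positivity) (by positivity))

section Term

variable {r : ℕ} (hr : 0 < r)

theorem prod_rpow_neg_le_of_mul_le_sum_Iic {x : Fin r → ℝ} (hx : Antitone x)
    (hx1 : ∀ i, 1 ≤ x i) {σ : Fin r → ℝ} {ε : ℝ} (hε : 0 ≤ ε) {k₀ : ℕ}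
    (hσ : ∀ i : Fin r, ((i : ℕ) + 1) * (1 + 2 * ε) ≤ ∑ j ∈ Iic i, σ j + k₀) (t : ℕ) :
    ∏ i, x i ^ (-(σ i + if i = ⟨0, hr⟩ then ((k₀ + t : ℕ) : ℝ) else 0)) ≤
      x ⟨0, hr⟩ ^ (-(t + ε)) * ∏ i, x i ^ (-(1 + ε)) := by
  have hx0 i : 0 < x i := zero_lt_one.trans_le (hx1 i)
  have hmem (i : Fin r) : (⟨0, hr⟩ : Fin r) ∈ Iic i := mem_Iic.2 (Nat.zero_le _)
  calc _ ≤ ∏ i, x i ^ (-((1 + ε) + if i = ⟨0, hr⟩ then (t + ε) else 0)) := by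
        refine prod_rpow_neg_le_of_sum_Iic_le hx hx1 fun i => ?_
        simp only [sum_add_distrib, sum_ite_eq', if_pos (hmem i), sum_const, Fin.card_Iic,
          nsmul_eq_mul]
        push_cast
        nlinarith [hσ i, (Nat.cast_nonneg i : (0 : ℝ) ≤ i)]
    _ = x ⟨0, hr⟩ ^ (-(t + ε)) * ∏ i, x i ^ (-(1 + ε)) := by
        rw [← prod_ite_eq_of_mem' univ (⟨0, hr⟩ : Fin r) (fun _ => x ⟨0, hr⟩ ^ (-(t + ε)))
          (mem_univ _), ← prod_mul_distrib]
        refine prod_congr rfl fun i _ => ?_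
        split_ifs with h
        · rw [h, ← Real.rpow_add (hx0 _)]
          ring_nf
        · simp

theorem rpow_neg_natCast_add_le {y N ε : ℝ} (hy : 2 ≤ y) (hN : 0 < N) (hNy : N ≤ y)
    (hε : 0 ≤ ε) (t : ℕ) : y ^ (-(t + ε)) ≤ (1 / 2) ^ t * N ^ (-ε) := by
  rw [neg_add, Real.rpow_add (by linarith), Real.rpow_neg (by linarith), Real.rpow_natCast,
    one_div, inv_pow]
  refine mul_le_mul ?_ (Real.rpow_le_rpow_of_nonpos hN hNy (neg_nonpos.2 hε)) (by positivity)
    (by positivity)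
  gcongr

theorem norm_summand_le {z : Fin r → ℂ} (hz : ∀ i, ‖z i‖ ≤ 1) {s : Fin r → ℂ} {A ε : ℝ}
    (hA : ‖s ⟨0, hr⟩ - 1‖ ≤ A) (hε : 0 ≤ ε) {k₀ : ℕ}
    (hs : ∀ i : Fin r, ((i : ℕ) + 1) * (1 + 2 * ε) ≤ (∑ j ∈ Iic i, s j).re + k₀)
    {N : ℕ} (hN : 2 ≤ N) {n : Fin r → ℕ} (hn : Antitone n) (hnN : ∀ i, N ≤ n i) (t : ℕ) :
    ‖poch (s ⟨0, hr⟩ - 1) (k₀ + t + 1) / ((k₀ + t + 1).factorial : ℂ) *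
        ∏ i, z i ^ n i / (n i : ℂ) ^ (s i + if i = ⟨0, hr⟩ then ((k₀ + t : ℕ) : ℂ) else 0)‖ ≤
      (N : ℝ) ^ (-ε) * majorant A ε k₀ (n, k₀ + t) := by
  have hN2 : (2 : ℝ) ≤ N := by exact_mod_cast hN
  have hnN' i : (N : ℝ) ≤ n i := by exact_mod_cast hnN i
  have hn1 i : (1 : ℝ) ≤ n i := by linarith [hnN' i]
  have hre i : (s i + if i = ⟨0, hr⟩ then ((k₀ + t : ℕ) : ℂ) else 0).re =
      (s i).re + if i = ⟨0, hr⟩ then ((k₀ + t : ℕ) : ℝ) else 0 := by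
    split_ifs <;> simp
  set C := ∏ j ∈ range (k₀ + t + 1), (A + j) / (j + 1)
  have hC : 0 ≤ C := prod_nonneg fun j _ =>
    div_nonneg (by linarith [norm_nonneg (s ⟨0, hr⟩ - 1)]) (by positivity)
  rw [norm_mul, norm_prod]
  calc _ ≤ C * ∏ i, (n i : ℝ) ^
          (-((s i).re + if i = ⟨0, hr⟩ then ((k₀ + t : ℕ) : ℝ) else 0)) := by
        refine mul_le_mul (norm_poch_div_factorial_le hA _)
          (prod_le_prod (fun i _ => norm_nonneg _) fun i _ => ?_)
          (prod_nonneg fun i _ => norm_nonneg _) hC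
        rw [← hre]
        exact norm_pow_div_natCast_cpow_le_s10 (hz i) (by linarith [hnN i]) _
    _ ≤ C * ((n ⟨0, hr⟩ : ℝ) ^ (-(t + ε)) * ∏ i, (n i : ℝ) ^ (-(1 + ε))) := by
        gcongr
        refine prod_rpow_neg_le_of_mul_le_sum_Iic hr (fun i j h => Nat.cast_le.2 (hn h)) hn1 hε
          (fun i => ?_) t
        rw [← Complex.re_sum]
        exact hs i
    _ ≤ C * ((1 / 2) ^ t * (N : ℝ) ^ (-ε) * ∏ i, (n i : ℝ) ^ (-(1 + ε))) := by
        gcongr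
        exact rpow_neg_natCast_add_le (by linarith [hnN' ⟨0, hr⟩]) (by linarith) (hnN' _) hε t
    _ = _ := by
        have h2 : (1 / 2 : ℝ) ^ t = 2 ^ (k₀ + 1) * (1 / 2) ^ (k₀ + t + 1) := by
          rw [show k₀ + t + 1 = (k₀ + 1) + t by ring, pow_add (1 / 2 : ℝ), ← mul_assoc,
            ← mul_pow]
          norm_num
        rw [h2, majorant]
        ring

theorem supTerm_nonneg {z : Fin r → ℂ} {K : Set (Fin r → ℂ)} {k₀ N : ℕ}
    (p : (Fin r → ℕ) × ℕ) :
    0 ≤ supTerm r hr z K k₀ N p := by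
  rw [supTerm]
  split_ifs
  · exact Real.iSup_nonneg fun _ => Real.iSup_nonneg fun _ => norm_nonneg _
  · exact le_rfl

theorem supTerm_le {z : Fin r → ℂ} (hz : ∀ i, ‖z i‖ ≤ 1) {K : Set (Fin r → ℂ)} {A ε : ℝ}
    (hA : ∀ s ∈ K, ‖s ⟨0, hr⟩ - 1‖ ≤ A) (hA0 : 0 ≤ A) (hε : 0 ≤ ε) {k₀ : ℕ}
    (hK : ∀ s ∈ K, ∀ i : Fin r, ((i : ℕ) + 1) * (1 + 2 * ε) ≤ (∑ j ∈ Iic i, s j).re + k₀)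
    {N : ℕ} (hN : 2 ≤ N) (p : (Fin r → ℕ) × ℕ) :
    supTerm r hr z K k₀ N p ≤ (N : ℝ) ^ (-ε) * majorant A ε k₀ p := by
  have hB : 0 ≤ (N : ℝ) ^ (-ε) * majorant A ε k₀ p :=
    mul_nonneg (by positivity) (majorant_nonneg hA0 ε k₀ p)
  obtain ⟨n, k⟩ := p
  rw [supTerm]
  split_ifs with hp
  · obtain ⟨hn, hnN, hk⟩ := hp
    obtain ⟨t, rfl⟩ := Nat.exists_eq_add_of_le hk
    exact Real.iSup_le (fun s => Real.iSup_le
      (fun hs => norm_summand_le hr hz (hA s hs) hε (hK s hs) hN hn hnN t) hB) hB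
  · exact hB

end Term

theorem normal_convergence_of_translation_family_general
    (r : ℕ) (hr : 0 < r) (z : Fin r → ℂ) (hz : ∀ i, ‖z i‖ ≤ 1)
    (K : Set (Fin r → ℂ)) (hK : IsCompact K) (k₀ : ℕ)
    (hk₀ : ∀ s ∈ K, ∀ i : Fin r,
      ((i : ℕ) + 1 : ℝ) < (∑ j ∈ Finset.Iic i, s j).re + k₀) :
    (∀ N : ℕ, 2 ≤ N → Summable (fun p : (Fin r → ℕ) × ℕ => supTerm r hr z K k₀ N p)) ∧
    ∃ ε : ℝ, 0 < ε ∧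
      (fun N : ℕ => ∑' p : (Fin r → ℕ) × ℕ, supTerm r hr z K k₀ N p)
        =O[atTop] fun N : ℕ => (N : ℝ) ^ (-ε) := by
  obtain ⟨C, hC⟩ := hK.exists_bound_of_continuousOn
    (f := fun s : Fin r → ℂ => s ⟨0, hr⟩ - 1) (by fun_prop)
  obtain ⟨c, hc, hcK⟩ := hK.exists_one_lt_forall_mul_le
    (g := fun i s => (∑ j ∈ Iic i, s j).re + k₀) (w := fun i : Fin r => ((i : ℕ) : ℝ) + 1)
    (fun _ => by fun_prop) (fun _ => by positivity) hk₀
  set ε := (c - 1) / 2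
  have hε : 0 < ε := by simp only [ε]; linarith
  have hmargin : ∀ s ∈ K, ∀ i : Fin r,
      ((i : ℕ) + 1) * (1 + 2 * ε) ≤ (∑ j ∈ Iic i, s j).re + k₀ := fun s hs i => by
      rw [show 1 + 2 * ε = c by simp only [ε]; ring, mul_comm]
      exact hcK s hs i
  have hbound N (hN : 2 ≤ N) := supTerm_le hr hz
    (fun s hs => (hC s hs).trans (le_max_left C 0)) (le_max_right C 0) hε.le hmargin hN
  have hmajorant := summable_majorant (ι := Fin r) (le_max_right C 0) hε k₀
  have hsummable N (hN : 2 ≤ N) : Summable (supTerm r hr z K k₀ N) :=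
    (hmajorant.mul_left _).of_nonneg_of_le (supTerm_nonneg hr) (hbound N hN)
  refine ⟨hsummable, ε, hε, isBigO_iff.2 ⟨∑' p, majorant (ι := Fin r) (max C 0) ε k₀ p, ?_⟩⟩
  filter_upwards [eventually_ge_atTop 2] with N hN
  rw [Real.norm_of_nonneg (tsum_nonneg (supTerm_nonneg hr)),
    Real.norm_of_nonneg (by positivity), mul_comm, ← tsum_mul_left]
  exact (hsummable N hN).tsum_le_tsum (hbound N hN) (hmajorant.mul_left _)

/-- normal convergence on a compact `K` of the doubly indexed family, where
`k₀` is the least non-negative integer with `(s_1+k₀,s_2,…,s_r) ∈ U_r` for all `s ∈ K`;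
moreover the total sum of the suprema is `O(N^{−ε})` for some `ε > 0`. -/
theorem normal_convergence_of_translation_family
    (r : ℕ) (hr : 0 < r) (z : Fin r → ℂ) (hz : ∀ i, ‖z i‖ ≤ 1)
    (K : Set (Fin r → ℂ)) (hK : IsCompact K) (k₀ : ℕ)
    (hk₀ : ∀ s ∈ K, ∀ i : Fin r,
      ((i : ℕ) + 1 : ℝ) < (∑ j ∈ Finset.Iic i, s j).re + k₀)
    (hk₀min : ∀ k' : ℕ, k' < k₀ → ∃ s ∈ K, ∃ i : Fin r,
      ¬(((i : ℕ) + 1 : ℝ) < (∑ j ∈ Finset.Iic i, s j).re + k')) :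
    (∀ N : ℕ, 2 ≤ N → Summable (fun p : (Fin r → ℕ) × ℕ => supTerm r hr z K k₀ N p)) ∧
    ∃ ε : ℝ, 0 < ε ∧
      (fun N : ℕ => ∑' p : (Fin r → ℕ) × ℕ, supTerm r hr z K k₀ N p)
        =O[atTop] fun N : ℕ => (N : ℝ) ^ (-ε) :=
  normal_convergence_of_translation_family_general r hr z hz K hK k₀ hk₀
end

section
/- The limit as N → ∞ of Σ_{N>n_1>n_2>0} (−1)^{n_2}·n_2/n_1^2 exists and equals (log 2)/2 − π²/16; equivalently, Σ_{N>n_1>n_2>0} (−1)^{n_2}/(n_1^{2} n_2^{−1}) = (log 2)/2 − π²/16 + o(1) as N → ∞. -/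
/-!
Summing the inner alternating sum in closed form, `∑_{k<m} (-1)^k k = ((-1)^(m+1) (2m-1) - 1) / 4`,
turns the double sum into a combination of three single series:
`(1/2) ∑ (-1)^(m+1)/m - (1/4) ∑ (-1)^(m+1)/m² - (1/4) ∑ 1/m²`.
The alternating harmonic series sums to `log 2`, because its partial sums are `H_n - H_{⌊n/2⌋}`
and `H_n - log n` converges (to Euler's constant); the other two series are `ζ(2)/2 = π²/12`
and `ζ(2) = π²/6`.
-/

open Filter Topology Finset

lemma four_mul_sum_range_neg_one_pow_mul_cast {R : Type*} [CommRing R] (m : ℕ) :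
    4 * ∑ k ∈ range m, (-1 : R) ^ k * k = (-1) ^ (m + 1) * (2 * m - 1) - 1 := by
  induction m with
  | zero => simp
  | succ m ih =>
    rw [sum_range_succ, mul_add, ih]
    push_cast
    ring

lemma sum_range_neg_one_pow_mul_cast_div_sq {K : Type*} [Field K] [CharZero K] (m : ℕ) :
    (∑ k ∈ range m, (-1 : K) ^ k * k) / (m : K) ^ 2 =
      1 / 2 * ((-1) ^ (m + 1) / m) - 1 / 4 * ((-1) ^ (m + 1) / (m : K) ^ 2)
        - 1 / 4 * (1 / (m : K) ^ 2) := by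
  rcases eq_or_ne m 0 with rfl | hm
  · simp
  · have h4 := four_mul_sum_range_neg_one_pow_mul_cast (R := K) m
    field_simp
    linear_combination 2 * h4

-- The `m = 0` term is `(-1) / 0 = 0`.
lemma sum_range_succ_neg_one_pow_succ_div_eq_harmonic_sub (n : ℕ) :
    ∑ m ∈ range (n + 1), (-1 : ℝ) ^ (m + 1) / m = harmonic n - harmonic (n / 2) := by
  induction n with
  | zero => simp
  | succ n ih =>
    rw [sum_range_succ, ih, harmonic_succ]
    obtain ⟨k, rfl | rfl⟩ := Nat.even_or_odd' n
    · rw [show (2 * k + 1) / 2 = 2 * k / 2 by omega, pow_succ, pow_succ, pow_mul]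
      push_cast
      ring
    · rw [show (2 * k + 1 + 1) / 2 = k + 1 by omega, show (2 * k + 1) / 2 = k by omega,
        harmonic_succ k, pow_succ, pow_succ, pow_succ, pow_mul]
      push_cast
      field_simp
      ring

lemma tendsto_natCast_add_one_div_natCast_div_two_add_one :
    Tendsto (fun n : ℕ => ((n : ℝ) + 1) / ((n / 2 : ℕ) + 1)) atTop (𝓝 2) := by
  have hlower : Tendsto (fun n : ℕ => ((n : ℝ) + 1) / ((n : ℝ) / 2 + 1)) atTop (𝓝 2) := by
    have h := tendsto_const_nhds (x := (2 : ℝ)).sub <|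
      tendsto_const_nhds (x := (2 : ℝ)).div_atTop
        (tendsto_atTop_add_const_right _ 2 tendsto_natCast_atTop_atTop)
    rw [sub_zero] at h
    refine h.congr fun n => ?_
    field_simp
    ring
  refine tendsto_of_tendsto_of_tendsto_of_le_of_le hlower tendsto_const_nhds (fun n => ?_)
    (fun n => ?_)
  · gcongr
    exact Nat.cast_div_le
  · rw [div_le_iff₀ (by positivity)]
    have : (n : ℝ) ≤ 2 * (n / 2 : ℕ) + 1 := by exact_mod_cast (by omega : n ≤ 2 * (n / 2) + 1)
    linarith

lemma tendsto_harmonic_sub_harmonic {f : ℕ → ℕ} {c : ℝ} (hf : Tendsto f atTop atTop)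
    (hc : c ≠ 0)
    (hratio : Tendsto (fun n : ℕ => ((n : ℝ) + 1) / ((f n : ℝ) + 1)) atTop (𝓝 c)) :
    Tendsto (fun n : ℕ => (harmonic n - harmonic (f n) : ℝ)) atTop (𝓝 (Real.log c)) := by
  have hγ := Real.tendsto_eulerMascheroniSeq
  have h := (hγ.sub (hγ.comp hf)).add ((Real.continuousAt_log hc).tendsto.comp hratio)
  rw [sub_self, zero_add] at h
  refine h.congr fun n => ?_
  simp only [Function.comp, Real.eulerMascheroniSeq]
  rw [Real.log_div (by positivity) (by positivity)]
  ring

lemma tendsto_sum_range_neg_one_pow_succ_div :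
    Tendsto (fun N : ℕ => ∑ m ∈ range N, (-1 : ℝ) ^ (m + 1) / m) atTop
      (𝓝 (Real.log 2)) := by
  rw [← tendsto_add_atTop_iff_nat 1]
  simp only [sum_range_succ_neg_one_pow_succ_div_eq_harmonic_sub]
  exact tendsto_harmonic_sub_harmonic (Nat.tendsto_div_const_atTop two_ne_zero) two_ne_zero
    tendsto_natCast_add_one_div_natCast_div_two_add_one

lemma hasSum_neg_one_pow_succ_div_sq :
    HasSum (fun n : ℕ => (-1 : ℝ) ^ (n + 1) / (n : ℝ) ^ 2) (Real.pi ^ 2 / 12) := by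
  -- `f n` is `2 / n ^ 2` for even `n` and `0` for odd `n`.
  set f := fun n : ℕ => 1 / (n : ℝ) ^ 2 - (-1) ^ (n + 1) / (n : ℝ) ^ 2
  have heven : HasSum (fun k => f (2 * k)) (Real.pi ^ 2 / 12) := by
    rw [show Real.pi ^ 2 / 12 = 1 / 2 * (Real.pi ^ 2 / 6) by ring]
    refine (hasSum_zeta_two.mul_left (1 / 2)).congr_fun fun k => ?_
    simp only [f, pow_succ, pow_mul]
    push_cast
    ring
  have hodd : HasSum (fun k => f (2 * k + 1)) 0 :=
    hasSum_zero.congr_fun fun k => by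
      simp only [f, pow_succ, pow_mul]
      ring
  have hf : HasSum f (Real.pi ^ 2 / 12) := by simpa using heven.even_add_odd hodd
  rw [show Real.pi ^ 2 / 12 = Real.pi ^ 2 / 6 - Real.pi ^ 2 / 12 by ring]
  exact (hasSum_zeta_two.sub hf).congr_fun fun n => by simp [f]

/-- `lim_{N→∞} Σ_{N>n₁>n₂>0} (−1)^{n₂}·n₂/n₁² = (log 2)/2 − π²/16`. -/
theorem alternating_double_sum_value :
    Tendsto
      (fun N : ℕ =>
        ∑ n₁ ∈ Finset.range N, ∑ n₂ ∈ Finset.range n₁,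
          (-1 : ℝ) ^ n₂ * n₂ / (n₁ : ℝ) ^ 2)
      atTop (𝓝 (Real.log 2 / 2 - Real.pi ^ 2 / 16)) := by
  have hlim := ((tendsto_sum_range_neg_one_pow_succ_div.const_mul (1 / 2)).sub
    (hasSum_neg_one_pow_succ_div_sq.tendsto_sum_nat.const_mul (1 / 4))).sub
    (hasSum_zeta_two.tendsto_sum_nat.const_mul (1 / 4))
  rw [show Real.log 2 / 2 - Real.pi ^ 2 / 16
      = 1 / 2 * Real.log 2 - 1 / 4 * (Real.pi ^ 2 / 12) - 1 / 4 * (Real.pi ^ 2 / 6) by ring]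
  refine hlim.congr fun N => ?_
  simp only [← sum_div, sum_range_neg_one_pow_mul_cast_div_sq, mul_sum, ← sum_sub_distrib]
end

section
/- As N → ∞, Σ_{N>n_1>n_2>0} (−1)^{n_2}·n_2/n_1 = −(log N)/4 + (−1)^N/4 + (1 − log 2 − γ)/4 + o(1), where γ is the Euler–Mascheroni constant. -/
open Filter Topology Finset

/-!
Summing the inner alternating sum in closed form turns the double sum into
`(1 + (-1)^N + A_N - H_N) / 4`, where `H_N = ∑_{0<n<N} 1/n` and `A_N = ∑_{0<n<N} (-1)^n/n`.
Since the even terms of `A_N` add up to half of a harmonic sum, `A_N = H_⌈N/2⌉ - H_N`, and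
`H_M = log M + γ + o(1)` applied at `M = N` and `M = ⌈N/2⌉` gives the expansion.
-/

theorem four_mul_sum_range_neg_one_pow_mul {R : Type*} [CommRing R] (m : ℕ) :
    4 * ∑ k ∈ range m, (-1 : R) ^ k * k = 2 * (-1) ^ (m + 1) * m + (-1) ^ m - 1 := by
  induction m with
  | zero => simp
  | succ m ih =>
    rw [sum_range_succ, mul_add, ih]
    push_cast
    ring

theorem sum_range_sum_range_neg_one_pow_mul_div_eq (N : ℕ) (hN : 1 ≤ N) :
    ∑ n₁ ∈ range N, ∑ n₂ ∈ range n₁, (-1 : ℝ) ^ n₂ * n₂ / n₁ =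
      (1 + (-1) ^ N + ∑ n ∈ Ico 1 N, (-1 : ℝ) ^ n / n - ∑ n ∈ Ico 1 N, (1 : ℝ) / n) / 4 := by
  induction N, hN using Nat.le_induction with
  | base => norm_num
  | succ N hN ih =>
    have hN' : (N : ℝ) ≠ 0 := by positivity
    have inner : ∑ n₂ ∈ range N, (-1 : ℝ) ^ n₂ * n₂ / N =
        (2 * (-1) ^ (N + 1) * N + (-1) ^ N - 1) / (4 * N) := by
      rw [← sum_div, ← four_mul_sum_range_neg_one_pow_mul, mul_div_mul_left _ _ four_ne_zero]
    rw [sum_range_succ, ih, inner, sum_Ico_succ_top hN, sum_Ico_succ_top hN]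
    field_simp
    ring

theorem sum_Ico_one_neg_one_pow_div_eq (N : ℕ) :
    ∑ n ∈ Ico 1 N, (-1 : ℝ) ^ n / n =
      ∑ n ∈ Ico 1 ((N + 1) / 2), (1 : ℝ) / n - ∑ n ∈ Ico 1 N, (1 : ℝ) / n := by
  induction N with
  | zero => simp
  | succ N ih =>
    rcases N.eq_zero_or_pos with rfl | hN
    · simp
    rw [sum_Ico_succ_top hN, sum_Ico_succ_top hN, ih]
    obtain ⟨k, rfl | rfl⟩ := N.even_or_odd'
    · have hk : 1 ≤ k := by omega
      rw [show (2 * k + 1 + 1) / 2 = k + 1 by omega, show (2 * k + 1) / 2 = k by omega,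
        sum_Ico_succ_top hk]
      have hk' : (k : ℝ) ≠ 0 := by positivity
      push_cast
      simp only [pow_mul, neg_one_sq, one_pow]
      field_simp
      ring
    · rw [show (2 * k + 1 + 1 + 1) / 2 = k + 1 by omega, show (2 * k + 1 + 1) / 2 = k + 1 by omega,
        pow_succ, pow_mul, neg_one_sq, one_pow]
      ring

theorem tendsto_log_sub_log_of_le_of_le_add_one {u : ℕ → ℕ}
    (hu : ∀ᶠ N in atTop, N ≤ u N ∧ u N ≤ N + 1) :
    Tendsto (fun N : ℕ => Real.log (u N) - Real.log N) atTop (𝓝 0) := by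
  refine tendsto_of_tendsto_of_tendsto_of_le_of_le' tendsto_const_nhds
    Real.tendsto_log_nat_add_one_sub_log ?_ ?_
  · filter_upwards [hu, eventually_ge_atTop 1] with N ⟨hlow, _⟩ hN
    have : (0 : ℝ) < N := by exact_mod_cast hN
    exact sub_nonneg.mpr (Real.log_le_log this (by exact_mod_cast hlow))
  · filter_upwards [hu, eventually_ge_atTop 1] with N ⟨hlow, hup⟩ hN
    have : (0 : ℝ) < u N := by exact_mod_cast hN.trans hlow
    gcongr
    exact_mod_cast hup

/-- as `N → ∞`,
`Σ_{N>n₁>n₂>0} (−1)^{n₂}·n₂/n₁ = −(log N)/4 + (−1)^N/4 + (1 − log 2 − γ)/4 + o(1)`,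
where `γ` is the Euler–Mascheroni constant (characterised by the hypothesis `hγ`). -/
theorem alternating_double_sum_asymptotics
    (γ : ℝ)
    (hγ : Tendsto (fun N : ℕ => (∑ n ∈ Finset.Ico 1 N, (1 : ℝ) / n) - Real.log N)
      atTop (𝓝 γ)) :
    Tendsto
      (fun N : ℕ =>
        (∑ n₁ ∈ Finset.range N, ∑ n₂ ∈ Finset.range n₁,
            (-1 : ℝ) ^ n₂ * n₂ / (n₁ : ℝ)) -
          (-(Real.log N) / 4 + (-1 : ℝ) ^ N / 4 + (1 - Real.log 2 - γ) / 4))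
      atTop (𝓝 0) := by
  have hhalf : Tendsto (fun N : ℕ => (N + 1) / 2) atTop atTop :=
    (Nat.tendsto_div_const_atTop two_ne_zero).comp (tendsto_add_atTop_nat 1)
  have hlog :
      Tendsto (fun N : ℕ => Real.log (2 * ((N + 1) / 2 : ℕ) : ℕ) - Real.log N) atTop (𝓝 0) :=
    tendsto_log_sub_log_of_le_of_le_add_one (.of_forall fun N => by omega)
  have hlim :=
    ((((hγ.comp hhalf).sub_const γ).sub ((hγ.sub_const γ).const_mul 2)).add hlog).div_const 4
  rw [sub_self, mul_zero, sub_zero, zero_add, zero_div] at hlim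
  refine hlim.congr' ?_
  filter_upwards [eventually_ge_atTop 1] with N hN
  have hhalf_pos : ((N + 1) / 2 : ℕ) ≠ 0 := by omega
  simp only [Function.comp_apply]
  rw [sum_range_sum_range_neg_one_pow_mul_div_eq N hN, sum_Ico_one_neg_one_pow_div_eq,
    Nat.cast_mul, Nat.cast_ofNat, Real.log_mul two_ne_zero (by exact_mod_cast hhalf_pos)]
  ring
end
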